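/- Let N⁺(n₁,n₂,r,s) denote the number of pairs (u,v) ∈ Δ⁺_{n₁,r} × Δ⁺_{n₂,r} with D(u,v) = s, and let F⁺ be the formal power series F⁺(x,y,z) = Σ_{n₁,n₂,r,s ≥ 0} N⁺(n₁,n₂,r,s)·x^{n₁+n₂} y^{r} z^{s} in the ring of formal power series in three variables over ℚ. Then [(1−x²)(1−xz) − y·x²·(1+xz)]·F⁺ = (1−x²)(1−xz). -/

import Mathlib

/-!
Encode a pair `(u, v) ∈ Δ⁺_{n₁,r} × Δ⁺_{n₂,r}` as the word of its `r` cells `(uᵢ, vᵢ)`, a cell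
having weight `x^(uᵢ+vᵢ) y z^|uᵢ-vᵢ|`. Generating functions of weighted sets with finite fibres
turn disjoint unions into sums and products (with additive weights) into products. A word is empty
or a cell followed by a word, so `F⁺ = 1 + V F⁺`, where `V` counts single cells. Sorting a cell by
its minimum `m ≥ 1`, its gap `k ≥ 0` and which coordinate is larger gives
`V = y x² (1 + xz) / ((1 - x²)(1 - xz))`; eliminating `V` gives the identity.
-/

/-- `posSimplexPairCount n₁ n₂ r s` is the number of pairs
`(u,v) ∈ Δ⁺_{n₁,r} × Δ⁺_{n₂,r}` (positive simplices) with L1-distance `D(u,v) = s`. -/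
noncomputable def posSimplexPairCount (n₁ n₂ r s : ℕ) : ℕ :=
  Nat.card {p : (Fin r → ℤ) × (Fin r → ℤ) //
    (∀ i, 1 ≤ p.1 i) ∧ (∑ i, p.1 i) = (n₁ : ℤ) ∧
    (∀ i, 1 ≤ p.2 i) ∧ (∑ i, p.2 i) = (n₂ : ℤ) ∧
    (∑ i, |p.1 i - p.2 i|) = (s : ℤ)}

/-- The generating function `F⁺(x,y,z) = Σ N⁺(n₁,n₂,r,s) x^{n₁+n₂} y^r z^s` as a formal
power series in three variables over `ℚ` (variable `0` is `x`, `1` is `y`, `2` is `z`):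
the coefficient of `x^a y^r z^s` is `Σ_{n₁+n₂=a} N⁺(n₁,n₂,r,s)`. -/
noncomputable def FposSimplex : MvPowerSeries (Fin 3) ℚ :=
  fun d => ∑ pq ∈ Finset.HasAntidiagonal.antidiagonal (d 0),
    (posSimplexPairCount pq.1 pq.2 (d 1) (d 2) : ℚ)

local notation "Xv" => (MvPowerSeries.X 0 : MvPowerSeries (Fin 3) ℚ)
local notation "Yv" => (MvPowerSeries.X 1 : MvPowerSeries (Fin 3) ℚ)
local notation "Zv" => (MvPowerSeries.X 2 : MvPowerSeries (Fin 3) ℚ)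

open MvPowerSeries Finset

section WeightGF

variable {σ α β : Type*} (R : Type*) [CommSemiring R]

noncomputable def weightGF (w : α → σ →₀ ℕ) : MvPowerSeries σ R :=
  fun d => Nat.card {a // w a = d}

variable {R}

theorem coeff_weightGF (w : α → σ →₀ ℕ) (d : σ →₀ ℕ) :
    coeff d (weightGF R w) = Nat.card {a // w a = d} := rfl

def fiberEquivOfEquiv {w : α → σ →₀ ℕ} {w' : β → σ →₀ ℕ} (e : α ≃ β)
    (h : ∀ a, w' (e a) = w a) (d : σ →₀ ℕ) : {a // w a = d} ≃ {b // w' b = d} :=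
  e.subtypeEquiv fun a => by rw [h]

theorem weightGF_congr {w : α → σ →₀ ℕ} {w' : β → σ →₀ ℕ} (e : α ≃ β)
    (h : ∀ a, w' (e a) = w a) : weightGF R w = weightGF R w' := by
  ext d
  rw [coeff_weightGF, coeff_weightGF, Nat.card_congr (fiberEquivOfEquiv e h d)]

theorem weightGF_unit (c : σ →₀ ℕ) : weightGF R (fun _ : Unit => c) = monomial c 1 := by
  classical
  ext d
  rw [coeff_weightGF, coeff_monomial]
  split_ifs with h
  · subst h
    simp
  · simp [Ne.symm h]

theorem weightGF_sumElim (w : α → σ →₀ ℕ) (w' : β → σ →₀ ℕ)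
    (hw : ∀ d, Finite {a // w a = d}) (hw' : ∀ d, Finite {b // w' b = d}) :
    weightGF R (Sum.elim w w') = weightGF R w + weightGF R w' := by
  ext d
  have : Finite {a // Sum.elim w w' (Sum.inl a) = d} := hw d
  have : Finite {b // Sum.elim w w' (Sum.inr b) = d} := hw' d
  rw [map_add, coeff_weightGF, coeff_weightGF, coeff_weightGF, Nat.card_congr Equiv.subtypeSum,
    Nat.card_sum, Nat.cast_add]
  rfl

def prodFiberEquiv [DecidableEq σ] (w : α → σ →₀ ℕ) (w' : β → σ →₀ ℕ) (d : σ →₀ ℕ) :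
    {p : α × β // w p.1 + w' p.2 = d} ≃
      Σ ef : antidiagonal d, {a // w a = ef.1.1} × {b // w' b = ef.1.2} where
  toFun p := ⟨⟨(w p.1.1, w' p.1.2), mem_antidiagonal.2 p.2⟩, ⟨p.1.1, rfl⟩, ⟨p.1.2, rfl⟩⟩
  invFun x := ⟨(x.2.1, x.2.2), by rw [x.2.1.2, x.2.2.2]; exact mem_antidiagonal.1 x.1.2⟩
  left_inv _ := rfl
  right_inv := by
    rintro ⟨⟨⟨e, f⟩, h⟩, ⟨a, ha⟩, ⟨b, hb⟩⟩
    dsimp only at ha hb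
    subst ha hb
    rfl

theorem finite_fiber_prod {w : α → σ →₀ ℕ} {w' : β → σ →₀ ℕ}
    (hw : ∀ d, Finite {a // w a = d}) (hw' : ∀ d, Finite {b // w' b = d}) (d : σ →₀ ℕ) :
    Finite {p : α × β // w p.1 + w' p.2 = d} := by
  classical
  exact Finite.of_equiv _ (prodFiberEquiv w w' d).symm

theorem weightGF_prod (w : α → σ →₀ ℕ) (w' : β → σ →₀ ℕ)
    (hw : ∀ d, Finite {a // w a = d}) (hw' : ∀ d, Finite {b // w' b = d}) :
    weightGF R (fun p : α × β => w p.1 + w' p.2) = weightGF R w * weightGF R w' := by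
  classical
  ext d
  rw [coeff_weightGF, coeff_mul, Nat.card_congr (prodFiberEquiv w w' d), Nat.card_sigma,
    ← sum_coe_sort (antidiagonal d)]
  simp [coeff_weightGF]

theorem finite_fiber_of_injective {w : α → σ →₀ ℕ} (hw : Function.Injective w) (d : σ →₀ ℕ) :
    Finite {a // w a = d} :=
  have : Subsingleton {a // w a = d} := ⟨fun a b => Subtype.ext (hw (a.2.trans b.2.symm))⟩
  Finite.of_subsingleton

theorem finite_fiber_nsmul {e : σ →₀ ℕ} (he : e ≠ 0) (d : σ →₀ ℕ) :
    Finite {n : ℕ // n • e = d} := by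
  refine finite_fiber_of_injective (fun m n h => ?_) d
  obtain ⟨i, hi⟩ := Finsupp.ne_iff.1 he
  have := congr($h i)
  simp only [Finsupp.smul_apply, smul_eq_mul, Finsupp.coe_zero, Pi.zero_apply] at this hi
  exact Nat.eq_of_mul_eq_mul_right (Nat.pos_of_ne_zero hi) this

end WeightGF

theorem one_sub_monomial_mul_weightGF_nsmul {σ R : Type*} [CommRing R] {e : σ →₀ ℕ}
    (he : e ≠ 0) : (1 - monomial e 1) * weightGF R (fun n : ℕ => n • e) = 1 := by
  have hfin := finite_fiber_nsmul he
  have hrec : weightGF R (fun n : ℕ => n • e) =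
      monomial e 1 * weightGF R (fun n : ℕ => n • e) + 1 :=
    calc weightGF R (fun n : ℕ => n • e)
        = weightGF R (Sum.elim (fun p : Unit × ℕ => e + p.2 • e) fun _ : Unit => 0) := by
          refine weightGF_congr (Equiv.natEquivNatSumPUnit.trans
            (Equiv.sumCongr (Equiv.punitProd ℕ).symm (Equiv.refl _))) ?_
          rintro (_ | n) <;> simp [Equiv.natEquivNatSumPUnit, succ_nsmul']
      _ = weightGF R (fun p : Unit × ℕ => e + p.2 • e) + weightGF R (fun _ : Unit => 0) :=
          weightGF_sumElim _ _ (finite_fiber_prod (w := fun _ : Unit => e)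
            (fun _ => inferInstance) hfin) fun _ => inferInstance
      _ = monomial e 1 * weightGF R (fun n : ℕ => n • e) + 1 := by
          rw [weightGF_prod (fun _ : Unit => e) _ (fun _ => inferInstance) hfin,
            weightGF_unit, weightGF_unit, monomial_zero_one]
  linear_combination hrec

noncomputable def expXYZ (a b c : ℕ) : Fin 3 →₀ ℕ :=
  Finsupp.single 0 a + Finsupp.single 1 b + Finsupp.single 2 c

theorem expXYZ_eq_iff {a b c : ℕ} {d : Fin 3 →₀ ℕ} :
    expXYZ a b c = d ↔ a = d 0 ∧ b = d 1 ∧ c = d 2 := by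
  constructor
  · rintro rfl
    simp [expXYZ]
  · rintro ⟨rfl, rfl, rfl⟩
    ext i
    fin_cases i <;> simp [expXYZ]

theorem expXYZ_ne_zero_of_left {a b c : ℕ} (ha : a ≠ 0) : expXYZ a b c ≠ 0 :=
  fun h => ha (expXYZ_eq_iff.1 h).1

theorem expXYZ_add (a b c a' b' c' : ℕ) :
    expXYZ a b c + expXYZ a' b' c' = expXYZ (a + a') (b + b') (c + c') := by
  simp only [expXYZ, Finsupp.single_add]
  abel

theorem nsmul_expXYZ (n a b c : ℕ) : n • expXYZ a b c = expXYZ (n * a) (n * b) (n * c) := by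
  simp [expXYZ, Finsupp.smul_single]

theorem sum_expXYZ {ι : Type*} (s : Finset ι) (a b c : ι → ℕ) :
    ∑ i ∈ s, expXYZ (a i) (b i) (c i) =
      expXYZ (∑ i ∈ s, a i) (∑ i ∈ s, b i) (∑ i ∈ s, c i) := by
  simp [expXYZ, sum_add_distrib, Finsupp.single_finsetSum]

theorem monomial_expXYZ {R : Type*} [CommSemiring R] (a b c : ℕ) :
    monomial (expXYZ a b c) (1 : R) = X 0 ^ a * X 1 ^ b * X 2 ^ c := by
  simp only [expXYZ, X_pow_eq, monomial_mul_monomial, mul_one]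

/-- The cell `(a, b)` stands for the coordinate pair `(a + 1, b + 1)`. -/
noncomputable def cellWeight (p : ℕ × ℕ) : Fin 3 →₀ ℕ :=
  expXYZ ((p.1 + 1) + (p.2 + 1)) 1 ((p.1 : ℤ) - p.2).natAbs

def cellEquiv : (Unit ⊕ Unit) × (ℕ × ℕ) ≃ ℕ × ℕ where
  toFun
    | (.inl _, (i, j)) => (i + j, i)
    | (.inr _, (i, j)) => (i, i + j + 1)
  invFun p := if p.2 ≤ p.1 then (.inl (), (p.2, p.1 - p.2)) else (.inr (), (p.1, p.2 - p.1 - 1))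
  left_inv := by
    rintro ⟨⟨⟩ | ⟨⟩, i, j⟩
    · simp
    · simp only [Order.add_one_le_iff, add_lt_iff_neg_left, not_lt_zero, if_false, Prod.mk.injEq,
        true_and]
      omega
  right_inv := by
    rintro ⟨a, b⟩
    by_cases h : b ≤ a
    · simp [h]
    · simp only [h, if_false, Prod.mk.injEq, true_and]
      omega

theorem cellWeight_cellEquiv (x : (Unit ⊕ Unit) × (ℕ × ℕ)) :
    cellWeight (cellEquiv x) = Sum.elim (fun _ => expXYZ 2 1 0) (fun _ => expXYZ 3 1 1) x.1
      + (x.2.1 • expXYZ 2 0 0 + x.2.2 • expXYZ 1 0 1) := by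
  rcases x with ⟨⟨⟩ | ⟨⟩, i, j⟩ <;>
  · simp only [cellEquiv, cellWeight, Equiv.coe_fn_mk, Sum.elim_inl, Sum.elim_inr, nsmul_expXYZ,
      expXYZ_add]
    congr 1 <;> push_cast <;> omega

theorem finite_fiber_cellWeight (d : Fin 3 →₀ ℕ) : Finite {p // cellWeight p = d} :=
  @Finite.of_equiv _ _
    (finite_fiber_prod (fun _ => inferInstance)
      (finite_fiber_prod (finite_fiber_nsmul (expXYZ_ne_zero_of_left two_ne_zero))
        (finite_fiber_nsmul (expXYZ_ne_zero_of_left one_ne_zero))) d)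
    (fiberEquivOfEquiv cellEquiv cellWeight_cellEquiv d)

theorem weightGF_cellWeight :
    weightGF ℚ cellWeight = Yv * Xv ^ 2 * (1 + Xv * Zv) *
      (weightGF ℚ (fun n : ℕ => n • expXYZ 2 0 0) *
        weightGF ℚ (fun n : ℕ => n • expXYZ 1 0 1)) := by
  have hx2 := finite_fiber_nsmul (expXYZ_ne_zero_of_left (b := 0) (c := 0) two_ne_zero)
  have hxz := finite_fiber_nsmul (expXYZ_ne_zero_of_left (b := 0) (c := 1) one_ne_zero)
  rw [← weightGF_congr cellEquiv cellWeight_cellEquiv,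
    weightGF_prod _ _ (fun _ => inferInstance) (finite_fiber_prod hx2 hxz),
    weightGF_sumElim _ _ (fun _ => inferInstance) (fun _ => inferInstance),
    weightGF_unit, weightGF_unit, weightGF_prod _ _ hx2 hxz, monomial_expXYZ, monomial_expXYZ]
  ring

theorem denominator_mul_weightGF_cellWeight :
    (1 - Xv ^ 2) * (1 - Xv * Zv) * weightGF ℚ cellWeight = Yv * Xv ^ 2 * (1 + Xv * Zv) := by
  have hx2 := one_sub_monomial_mul_weightGF_nsmul (R := ℚ)
    (expXYZ_ne_zero_of_left (b := 0) (c := 0) two_ne_zero)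
  have hxz := one_sub_monomial_mul_weightGF_nsmul (R := ℚ)
    (expXYZ_ne_zero_of_left (b := 0) (c := 1) one_ne_zero)
  simp only [monomial_expXYZ, pow_zero, pow_one, mul_one] at hx2 hxz
  rw [weightGF_cellWeight]
  linear_combination Yv * Xv ^ 2 * (1 + Xv * Zv) * ((1 - Xv * Zv) *
    weightGF ℚ (fun n : ℕ => n • expXYZ 1 0 1) * hx2 + hxz)

abbrev Config : Type := Σ r, Fin r → ℕ × ℕ

noncomputable def configWeight (c : Config) : Fin 3 →₀ ℕ := ∑ i, cellWeight (c.2 i)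

def configEquiv : Unit ⊕ (ℕ × ℕ) × Config ≃ Config where
  toFun
    | .inl _ => ⟨0, Fin.elim0⟩
    | .inr (p, ⟨r, f⟩) => ⟨r + 1, Fin.cons p f⟩
  invFun
    | ⟨0, _⟩ => .inl ()
    | ⟨r + 1, f⟩ => .inr (f 0, ⟨r, Fin.tail f⟩)
  left_inv := by
    rintro (⟨⟩ | ⟨p, r, f⟩) <;> simp
  right_inv := by
    rintro ⟨_ | r, f⟩
    · simp [Subsingleton.elim f Fin.elim0]
    · simp

theorem configWeight_configEquiv (x : Unit ⊕ (ℕ × ℕ) × Config) :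
    configWeight (configEquiv x) =
      Sum.elim (fun _ => 0) (fun q => cellWeight q.1 + configWeight q.2) x := by
  rcases x with ⟨⟩ | ⟨p, r, f⟩
  · simp [configEquiv, configWeight]
  · rw [show configEquiv (.inr (p, ⟨r, f⟩)) = ⟨r + 1, Fin.cons p f⟩ from rfl]
    simp only [configWeight]
    rw [Fin.sum_univ_succ]
    simp

theorem sum_cellWeight {r : ℕ} (f : Fin r → ℕ × ℕ) :
    ∑ i, cellWeight (f i) = expXYZ (∑ i, ((f i).1 + 1) + ∑ i, ((f i).2 + 1)) r
      (∑ i, (((f i).1 : ℤ) - (f i).2).natAbs) := by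
  simp only [cellWeight, sum_expXYZ, sum_add_distrib, sum_const, card_univ, Fintype.card_fin,
    smul_eq_mul, mul_one]

def natSimplexPairs (n₁ n₂ r s : ℕ) : Set (Fin r → ℕ × ℕ) :=
  {f | ∑ i, ((f i).1 + 1) = n₁ ∧ ∑ i, ((f i).2 + 1) = n₂ ∧
    ∑ i, (((f i).1 : ℤ) - (f i).2).natAbs = s}

theorem finite_natSimplexPairs (n₁ n₂ r s : ℕ) : (natSimplexPairs n₁ n₂ r s).Finite := by
  refine (Set.Finite.pi (t := fun _ => Set.Iic n₁ ×ˢ Set.Iic n₂)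
    fun _ => (Set.finite_Iic _).prod (Set.finite_Iic _)).subset ?_
  rintro f ⟨h₁, h₂, -⟩ i -
  have hle₁ := single_le_sum (f := fun i => (f i).1 + 1) (fun _ _ => Nat.zero_le _) (mem_univ i)
  have hle₂ := single_le_sum (f := fun i => (f i).2 + 1) (fun _ _ => Nat.zero_le _) (mem_univ i)
  simp only [Set.mem_prod, Set.mem_Iic]
  omega

theorem natCast_sum_toNat_sub_one_add_one {r : ℕ} (u : Fin r → ℤ) (hu : ∀ i, 1 ≤ u i) :
    ((∑ i, ((u i - 1).toNat + 1) : ℕ) : ℤ) = ∑ i, u i := by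
  push_cast
  exact sum_congr rfl fun i _ => by have := hu i; omega

def natSimplexPairsEquiv (n₁ n₂ r s : ℕ) : natSimplexPairs n₁ n₂ r s ≃
    {p : (Fin r → ℤ) × (Fin r → ℤ) // (∀ i, 1 ≤ p.1 i) ∧ (∑ i, p.1 i) = (n₁ : ℤ) ∧
      (∀ i, 1 ≤ p.2 i) ∧ (∑ i, p.2 i) = (n₂ : ℤ) ∧ (∑ i, |p.1 i - p.2 i|) = (s : ℤ)} where
  toFun f := ⟨(fun i => (f.1 i).1 + 1, fun i => (f.1 i).2 + 1), by
    obtain ⟨f, h₁, h₂, h₃⟩ := f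
    dsimp only
    refine ⟨fun i => by omega, ?_, fun i => by omega, ?_, ?_⟩
    · rw [← h₁]; push_cast; rfl
    · rw [← h₂]; push_cast; rfl
    · rw [← h₃]; push_cast [Int.natCast_natAbs]; simp⟩
  invFun p := ⟨fun i => ((p.1.1 i - 1).toNat, (p.1.2 i - 1).toNat), by
    obtain ⟨⟨u, v⟩, hu, h₁, hv, h₂, h₃⟩ := p
    dsimp only at *
    refine ⟨?_, ?_, ?_⟩
    · exact_mod_cast (natCast_sum_toNat_sub_one_add_one u hu).trans h₁
    · exact_mod_cast (natCast_sum_toNat_sub_one_add_one v hv).trans h₂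
    · rw [← Nat.cast_inj (R := ℤ), ← h₃]
      push_cast [Int.natCast_natAbs]
      refine sum_congr rfl fun i _ => ?_
      rw [Int.toNat_of_nonneg (by linarith [hu i]), Int.toNat_of_nonneg (by linarith [hv i])]
      ring_nf⟩
  left_inv f := by ext <;> simp
  right_inv p := by
    obtain ⟨⟨u, v⟩, hu, -, hv, -⟩ := p
    dsimp only at hu hv
    ext i
    · have := hu i
      dsimp only
      omega
    · have := hv i
      dsimp only
      omega

theorem card_natSimplexPairs (n₁ n₂ r s : ℕ) :
    Nat.card (natSimplexPairs n₁ n₂ r s) = posSimplexPairCount n₁ n₂ r s :=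
  Nat.card_congr (natSimplexPairsEquiv n₁ n₂ r s)

def cellWeightFiberEquiv (d : Fin 3 →₀ ℕ) :
    {f : Fin (d 1) → ℕ × ℕ // ∑ i, cellWeight (f i) = d} ≃
      Σ n : antidiagonal (d 0), natSimplexPairs n.1.1 n.1.2 (d 1) (d 2) where
  toFun f :=
    have h := expXYZ_eq_iff.1 ((sum_cellWeight f.1).symm.trans f.2)
    ⟨⟨(∑ i, ((f.1 i).1 + 1), ∑ i, ((f.1 i).2 + 1)), mem_antidiagonal.2 h.1⟩,
      ⟨f.1, rfl, rfl, h.2.2⟩⟩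
  invFun x := ⟨x.2.1, by
    obtain ⟨⟨n, hn⟩, f, h₁, h₂, h₃⟩ := x
    dsimp only at h₁ h₂ ⊢
    rw [sum_cellWeight, expXYZ_eq_iff, h₁, h₂, h₃]
    exact ⟨mem_antidiagonal.1 hn, rfl, rfl⟩⟩
  left_inv _ := rfl
  right_inv := by
    rintro ⟨⟨⟨n₁, n₂⟩, hn⟩, f, h₁, h₂, h₃⟩
    dsimp only at h₁ h₂
    subst h₁ h₂
    rfl

noncomputable def configFiberEquiv (d : Fin 3 →₀ ℕ) :
    {f : Fin (d 1) → ℕ × ℕ // ∑ i, cellWeight (f i) = d} ≃ {c : Config // configWeight c = d} :=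
  Equiv.ofBijective (fun f => ⟨⟨d 1, f.1⟩, f.2⟩) ⟨fun _ _ h =>
    Subtype.ext (sigma_mk_injective congr(($h).1)), by
      rintro ⟨⟨r, f⟩, h⟩
      obtain rfl : r = d 1 := (expXYZ_eq_iff.1 ((sum_cellWeight f).symm.trans h)).2.1
      exact ⟨⟨f, h⟩, rfl⟩⟩

theorem finite_fiber_configWeight (d : Fin 3 →₀ ℕ) :
    Finite {c : Config // configWeight c = d} :=
  have := fun n₁ n₂ r s => (finite_natSimplexPairs n₁ n₂ r s).to_subtype
  Finite.of_equiv _ ((cellWeightFiberEquiv d).symm.trans (configFiberEquiv d))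

theorem FposSimplex_eq_weightGF_configWeight : FposSimplex = weightGF ℚ configWeight := by
  have := fun n₁ n₂ r s => (finite_natSimplexPairs n₁ n₂ r s).to_subtype
  ext d
  rw [coeff_weightGF, ← Nat.card_congr ((cellWeightFiberEquiv d).symm.trans (configFiberEquiv d)),
    Nat.card_sigma, coeff_apply, FposSimplex]
  simp only [card_natSimplexPairs]
  rw [sum_coe_sort (antidiagonal (d 0)) fun n => posSimplexPairCount n.1 n.2 (d 1) (d 2)]
  push_cast
  rfl

theorem weightGF_configWeight :
    weightGF ℚ configWeight = 1 + weightGF ℚ cellWeight * weightGF ℚ configWeight :=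
  calc weightGF ℚ configWeight
      = weightGF ℚ (Sum.elim (fun _ : Unit => 0)
          (fun q : (ℕ × ℕ) × Config => cellWeight q.1 + configWeight q.2)) :=
        (weightGF_congr configEquiv configWeight_configEquiv).symm
    _ = 1 + weightGF ℚ cellWeight * weightGF ℚ configWeight := by
        rw [weightGF_sumElim _ _ (fun _ => inferInstance)
            (finite_fiber_prod finite_fiber_cellWeight finite_fiber_configWeight),
          weightGF_unit, monomial_zero_one,
          weightGF_prod _ _ finite_fiber_cellWeight finite_fiber_configWeight]

/-- `[(1−x²)(1−xz) − y·x²·(1+xz)]·F⁺ = (1−x²)(1−xz)` as formal power series. -/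
theorem stmt10 :
    ((1 - Xv ^ 2) * (1 - Xv * Zv) - Yv * Xv ^ 2 * (1 + Xv * Zv)) * FposSimplex
      = (1 - Xv ^ 2) * (1 - Xv * Zv) := by
  rw [FposSimplex_eq_weightGF_configWeight]
  linear_combination (1 - Xv ^ 2) * (1 - Xv * Zv) * weightGF_configWeight +
    weightGF ℚ configWeight * denominator_mul_weightGF_cellWeight
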